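/- arXiv:2012.15317 — 9 statements merged into one kernel-verified Lean document; each statement's English description precedes it below -/
import Mathlib

section
/- Let Γ > 0 and ξ : [0,∞) → ℝ nonnegative and continuous. Then for all t ≥ 0, (∫₀ᵗ ξ(s) e^{-Γs/2} ds)(∫₀ᵗ ξ(s) e^{Γs/2} ds) ≥ (3/2) ∫₀ᵗ ξ(s) e^{-Γs/2} (∫₀ˢ ξ(τ) e^{Γτ/2} dτ) ds. -/
open MeasureTheory intervalIntegral Real

/-- With `A x = ∫₀ˣ f` and `B x = ∫₀ˣ g`, the derivative of `A B - c ∫₀ˣ f B` is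
`g A - (c - 1) f B`; the hypothesis says it is nonnegative, and the function vanishes at `0`. -/
theorem mul_integral_mul_primitive_le_integral_mul_integral {f g : ℝ → ℝ}
    (hf : Continuous f) (hg : Continuous g) {c : ℝ}
    (hfg : ∀ x, 0 ≤ x →
      (c - 1) * (f x * ∫ s in (0:ℝ)..x, g s) ≤ g x * ∫ s in (0:ℝ)..x, f s)
    {t : ℝ} (ht : 0 ≤ t) :
    c * ∫ s in (0:ℝ)..t, f s * ∫ τ in (0:ℝ)..s, g τ ≤
      (∫ s in (0:ℝ)..t, f s) * ∫ s in (0:ℝ)..t, g s := by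
  set A : ℝ → ℝ := fun x => ∫ s in (0:ℝ)..x, f s
  set B : ℝ → ℝ := fun x => ∫ s in (0:ℝ)..x, g s
  set C : ℝ → ℝ := fun x => ∫ s in (0:ℝ)..x, f s * B s
  have hA (x : ℝ) : HasDerivAt A (f x) x := (hf.integral_hasStrictDerivAt 0 x).hasDerivAt
  have hB (x : ℝ) : HasDerivAt B (g x) x := (hg.integral_hasStrictDerivAt 0 x).hasDerivAt
  have hBc : Continuous B := continuous_iff_continuousAt.2 fun x => (hB x).continuousAt
  have hC (x : ℝ) : HasDerivAt C (f x * B x) x :=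
    ((hf.mul hBc).integral_hasStrictDerivAt 0 x).hasDerivAt
  have hD (x : ℝ) : HasDerivAt (fun y => A y * B y - c * C y)
      (g x * A x - (c - 1) * (f x * B x)) x :=
    (((hA x).mul (hB x)).sub ((hC x).const_mul c)).congr_deriv (by ring)
  have hmono : MonotoneOn (fun y => A y * B y - c * C y) (Set.Ici 0) :=
    monotoneOn_of_hasDerivWithinAt_nonneg (convex_Ici 0)
      (continuous_iff_continuousAt.2 fun x => (hD x).continuousAt).continuousOn
      (fun x _ => (hD x).hasDerivWithinAt)
      (fun x hx => sub_nonneg.2 (hfg x (interior_subset hx)))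
  have := hmono Set.self_mem_Ici ht ht
  simp only [A, B, C, integral_same, mul_zero, sub_zero] at this
  linarith

theorem exp_neg_mul_integral_le_exp_mul_integral {Γ : ℝ} (hΓ : 0 ≤ Γ) {ξ : ℝ → ℝ}
    (hξ : ∀ s, 0 ≤ s → 0 ≤ ξ s) (hcont : Continuous ξ) {x : ℝ} (hx : 0 ≤ x) :
    exp (-Γ * x / 2) * ∫ s in (0:ℝ)..x, ξ s * exp (Γ * s / 2) ≤
      exp (Γ * x / 2) * ∫ s in (0:ℝ)..x, ξ s * exp (-Γ * s / 2) := by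
  simp only [← intervalIntegral.integral_const_mul]
  refine integral_mono_on hx (Continuous.intervalIntegrable (by fun_prop) _ _)
    (Continuous.intervalIntegrable (by fun_prop) _ _) fun s hs => ?_
  rw [mul_left_comm, mul_left_comm (exp _), ← exp_add, ← exp_add]
  refine mul_le_mul_of_nonneg_left (exp_le_exp.2 ?_) (hξ s hs.1)
  linarith [mul_nonneg hΓ (sub_nonneg.2 hs.2)]

theorem stmt1 (Γ : ℝ) (hΓ : 0 < Γ) (ξ : ℝ → ℝ)
    (hξ : ∀ s, 0 ≤ s → 0 ≤ ξ s) (hcont : Continuous ξ) :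
    ∀ t : ℝ, 0 ≤ t →
      (∫ s in (0:ℝ)..t, ξ s * Real.exp (-Γ * s / 2)) *
          (∫ s in (0:ℝ)..t, ξ s * Real.exp (Γ * s / 2)) ≥
        (3 / 2) * ∫ s in (0:ℝ)..t,
          ξ s * Real.exp (-Γ * s / 2) * ∫ τ in (0:ℝ)..s, ξ τ * Real.exp (Γ * τ / 2) := by
  intro t ht
  refine mul_integral_mul_primitive_le_integral_mul_integral (by fun_prop) (by fun_prop)
    (fun x hx => ?_) ht
  have hB : 0 ≤ ∫ s in (0:ℝ)..x, ξ s * exp (Γ * s / 2) :=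
    integral_nonneg hx fun s hs => mul_nonneg (hξ s hs.1) (exp_pos _).le
  have hcomp := mul_le_mul_of_nonneg_left
    (exp_neg_mul_integral_le_exp_mul_integral hΓ.le hξ hcont hx) (hξ x hx)
  have hL : 0 ≤ ξ x * (exp (-Γ * x / 2) * ∫ s in (0:ℝ)..x, ξ s * exp (Γ * s / 2)) :=
    mul_nonneg (hξ x hx) (mul_nonneg (exp_pos _).le hB)
  linarith
end

section
/- Let Γ > 0, κ ∈ [0,1], and ξ : [0,∞) → ℝ nonnegative and continuous. Then for all t ≥ 0, 2κΓ (∫₀ᵗ ξ(s) e^{Γs/2} ds)(∫₀ᵗ ξ(s) e^{-Γs/2} ds) ≤ 1 + 4κΓ ∫₀ᵗ ξ(s) e^{Γs/2} (∫₀ˢ ξ(τ) e^{-Γτ/2} dτ) ds. -/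
/-!
Write `F x = ∫₀ˣ ξ e^{Γs/2}` and `G x = ∫₀ˣ ξ e^{-Γs/2}`. Integration by parts gives
`F t G t = ∫₀ᵗ (F' G + F G')`, and `F G' ≤ F' G` pointwise because
`e^{-Γx/2} F x ≤ e^{Γx/2} G x` (compare the integrands: `e^{Γ(s-x)/2} ≤ 1 ≤ e^{Γ(x-s)/2}`).
Hence `F t G t ≤ 2 ∫₀ᵗ F' G`.
-/

open MeasureTheory intervalIntegral Real

theorem integral_mul_integral_le_two_mul_integral_mul_integral {f g : ℝ → ℝ} (hf : Continuous f)
    (hg : Continuous g) {a b : ℝ} (hab : a ≤ b)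
    (h : ∀ x ∈ Set.Icc a b, (∫ s in a..x, f s) * g x ≤ f x * ∫ s in a..x, g s) :
    (∫ s in a..b, f s) * (∫ s in a..b, g s) ≤ 2 * ∫ s in a..b, f s * ∫ τ in a..s, g τ := by
  have hF := fun x => (hf.integral_hasStrictDerivAt a x).hasDerivAt
  have hG := fun x => (hg.integral_hasStrictDerivAt a x).hasDerivAt
  have hFc : Continuous fun x => ∫ s in a..x, f s :=
    continuous_iff_continuousAt.2 fun x => (hF x).continuousAt
  have hGc : Continuous fun x => ∫ s in a..x, g s :=
    continuous_iff_continuousAt.2 fun x => (hG x).continuousAt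
  have hparts : (∫ s in a..b, f s) * (∫ s in a..b, g s) =
      ∫ x in a..b, f x * (∫ s in a..x, g s) + (∫ s in a..x, f s) * g x := by
    rw [integral_deriv_mul_eq_sub (fun x _ => hF x) (fun x _ => hG x)
      (hf.intervalIntegrable a b) (hg.intervalIntegrable a b)]
    simp
  calc (∫ s in a..b, f s) * (∫ s in a..b, g s)
      = ∫ x in a..b, f x * (∫ s in a..x, g s) + (∫ s in a..x, f s) * g x := hparts
    _ ≤ ∫ x in a..b, 2 * (f x * ∫ s in a..x, g s) := by
        refine integral_mono_on hab (((hf.mul hGc).add (hFc.mul hg)).intervalIntegrable a b)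
          ((continuous_const.mul (hf.mul hGc)).intervalIntegrable a b) fun x hx => ?_
        linarith [h x hx]
    _ = 2 * ∫ s in a..b, f s * ∫ τ in a..s, g τ := intervalIntegral.integral_const_mul _ _

theorem exp_neg_mul_integral_mul_exp_le {ξ : ℝ → ℝ} (hξ : Continuous ξ) {c a x : ℝ}
    (hc : 0 ≤ c) (hax : a ≤ x) (hξ_nonneg : ∀ s ∈ Set.Icc a x, 0 ≤ ξ s) :
    exp (-c * x) * ∫ s in a..x, ξ s * exp (c * s) ≤
      exp (c * x) * ∫ s in a..x, ξ s * exp (-c * s) := by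
  rw [← intervalIntegral.integral_const_mul, ← intervalIntegral.integral_const_mul]
  refine integral_mono_on hax (Continuous.intervalIntegrable (by fun_prop) a x)
    (Continuous.intervalIntegrable (by fun_prop) a x) fun s hs => ?_
  have hexp : exp (-c * x) * exp (c * s) ≤ exp (c * x) * exp (-c * s) := by
    rw [← exp_add, ← exp_add, exp_le_exp]
    nlinarith [hs.2]
  calc exp (-c * x) * (ξ s * exp (c * s)) = ξ s * (exp (-c * x) * exp (c * s)) := by ring
    _ ≤ ξ s * (exp (c * x) * exp (-c * s)) := mul_le_mul_of_nonneg_left hexp (hξ_nonneg s hs)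
    _ = exp (c * x) * (ξ s * exp (-c * s)) := by ring

theorem stmt2_general (Γ κ : ℝ) (hΓ : 0 < Γ) (hκ0 : 0 ≤ κ) (ξ : ℝ → ℝ)
    (hξ : ∀ s, 0 ≤ s → 0 ≤ ξ s) (hcont : Continuous ξ) :
    ∀ t : ℝ, 0 ≤ t →
      2 * κ * Γ * (∫ s in (0:ℝ)..t, ξ s * Real.exp (Γ * s / 2)) *
          (∫ s in (0:ℝ)..t, ξ s * Real.exp (-Γ * s / 2)) ≤
        1 + 4 * κ * Γ * ∫ s in (0:ℝ)..t,
          ξ s * Real.exp (Γ * s / 2) * ∫ τ in (0:ℝ)..s, ξ τ * Real.exp (-Γ * τ / 2) := by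
  intro t ht
  simp only [show ∀ s, Γ * s / 2 = Γ / 2 * s from fun s => by ring,
    show ∀ s, -Γ * s / 2 = -(Γ / 2) * s from fun s => by ring]
  have hcross : ∀ x ∈ Set.Icc 0 t,
      (∫ s in (0:ℝ)..x, ξ s * exp (Γ / 2 * s)) * (ξ x * exp (-(Γ / 2) * x)) ≤
        ξ x * exp (Γ / 2 * x) * ∫ s in (0:ℝ)..x, ξ s * exp (-(Γ / 2) * s) := fun x hx => by
    have hexp := exp_neg_mul_integral_mul_exp_le hcont (by positivity : 0 ≤ Γ / 2) hx.1
      fun s hs => hξ s hs.1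
    nlinarith [hξ x hx.1]
  have hprod := integral_mul_integral_le_two_mul_integral_mul_integral (by fun_prop) (by fun_prop) ht hcross
  have hrhs_nonneg : 0 ≤ ∫ s in (0:ℝ)..t,
      ξ s * exp (Γ / 2 * s) * ∫ τ in (0:ℝ)..s, ξ τ * exp (-(Γ / 2) * τ) :=
    integral_nonneg ht fun s hs => mul_nonneg (mul_nonneg (hξ s hs.1) (exp_pos _).le)
      (integral_nonneg hs.1 fun τ hτ => mul_nonneg (hξ τ hτ.1) (exp_pos _).le)
  nlinarith [mul_nonneg hκ0 hΓ.le]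

theorem stmt2 (Γ κ : ℝ) (hΓ : 0 < Γ) (hκ0 : 0 ≤ κ) (hκ1 : κ ≤ 1) (ξ : ℝ → ℝ)
    (hξ : ∀ s, 0 ≤ s → 0 ≤ ξ s) (hcont : Continuous ξ) :
    ∀ t : ℝ, 0 ≤ t →
      2 * κ * Γ * (∫ s in (0:ℝ)..t, ξ s * Real.exp (Γ * s / 2)) *
          (∫ s in (0:ℝ)..t, ξ s * Real.exp (-Γ * s / 2)) ≤
        1 + 4 * κ * Γ * ∫ s in (0:ℝ)..t,
          ξ s * Real.exp (Γ * s / 2) * ∫ τ in (0:ℝ)..s, ξ τ * Real.exp (-Γ * τ / 2) :=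
  stmt2_general Γ κ hΓ hκ0 ξ hξ hcont
end

section
/- Let κ ∈ (0,1], Γ > 0, and α > 0 with α ≠ 1. Define B(t) = (16κα/(α²−1)) e^{−(1+α)Γt/2} + (1 − 8κ/(α−1)) e^{−Γt} − (8κ/(α+1)) e^{−(1+α)Γt}. If α ≥ 8κ + 1, then B(t) > 0 for all t ≥ 0. -/
/-! With `x = e^{-(1+α)Γt/2}`, `y = e^{-Γt}`, `a = 8κ/(α+1)` and `b = 8κ/(α-1)`, partial fractions
turn `B(t)` into `(a + b) x + (1 - b) y - a x² = a x (1 - x) + (1 - b) (y - x) + x`. Since `t ≥ 0`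
and `α > 1` we have `0 < x ≤ 1` and `x ≤ y`, and `α ≥ 8κ + 1` is exactly `b ≤ 1`, so every summand
is nonnegative and the last one is positive. -/

open Real

lemma two_mul_mul_div_sq_sub_one {α : ℝ} (c : ℝ) (hp : α + 1 ≠ 0) (hm : α - 1 ≠ 0) :
    2 * c * α / (α ^ 2 - 1) = c / (α + 1) + c / (α - 1) := by
  rw [div_add_div _ _ hp hm]
  congr 1 <;> ring

lemma add_mul_add_sub_mul_sub_mul_sq_pos {a b x y : ℝ} (ha : 0 ≤ a) (hb : b ≤ 1)
    (hx₀ : 0 < x) (hx₁ : x ≤ 1) (hxy : x ≤ y) :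
    0 < (a + b) * x + (1 - b) * y - a * x ^ 2 := by
  have key : (a + b) * x + (1 - b) * y - a * x ^ 2 = a * x * (1 - x) + (1 - b) * (y - x) + x := by
    ring
  rw [key]
  have h₁ : 0 ≤ a * x * (1 - x) := by
    have := sub_nonneg.2 hx₁
    positivity
  have h₂ : 0 ≤ (1 - b) * (y - x) := mul_nonneg (sub_nonneg.2 hb) (sub_nonneg.2 hxy)
  linarith

theorem stmt7_general (Γ κ α : ℝ) (hΓ : 0 < Γ) (hκ0 : 0 < κ)
    (h : 8 * κ + 1 ≤ α) :
    ∀ t : ℝ, 0 ≤ t →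
      0 < (16 * κ * α / (α ^ 2 - 1)) * Real.exp (-(1 + α) * Γ * t / 2) +
            (1 - 8 * κ / (α - 1)) * Real.exp (-Γ * t) -
          (8 * κ / (α + 1)) * Real.exp (-(1 + α) * Γ * t) := by
  intro t ht
  have hα : 1 < α := by linarith
  have hsplit : 16 * κ * α / (α ^ 2 - 1) = 8 * κ / (α + 1) + 8 * κ / (α - 1) := by
    rw [← two_mul_mul_div_sq_sub_one _ (by linarith) (by linarith)]
    ring
  have hsq : exp (-(1 + α) * Γ * t) = exp (-(1 + α) * Γ * t / 2) ^ 2 := by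
    rw [sq, ← exp_add]
    ring_nf
  rw [hsplit, hsq]
  have hΓt : 0 ≤ Γ * t := by positivity
  apply add_mul_add_sub_mul_sub_mul_sq_pos
  · positivity
  · rw [div_le_one (by linarith)]
    linarith
  · exact exp_pos _
  · rw [exp_le_one_iff]
    nlinarith
  · rw [exp_le_exp]
    nlinarith

theorem stmt7 (Γ κ α : ℝ) (hΓ : 0 < Γ) (hκ0 : 0 < κ) (hκ1 : κ ≤ 1)
    (hα : 0 < α) (hα1 : α ≠ 1) (h : 8 * κ + 1 ≤ α) :
    ∀ t : ℝ, 0 ≤ t →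
      0 < (16 * κ * α / (α ^ 2 - 1)) * Real.exp (-(1 + α) * Γ * t / 2) +
            (1 - 8 * κ / (α - 1)) * Real.exp (-Γ * t) -
          (8 * κ / (α + 1)) * Real.exp (-(1 + α) * Γ * t) :=
  stmt7_general Γ κ α hΓ hκ0 h
end

section
/- Let κ ∈ (0,1], Γ > 0, and α ∈ (0,1). Define B(t) = (16κα/(α²−1)) e^{−(1+α)Γt/2} + (1 − 8κ/(α−1)) e^{−Γt} − (8κ/(α+1)) e^{−(1+α)Γt}. Then B(0) = 1 and there exists t > 0 with B(t) = 0. -/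
/-!
Factoring out `exp (-(1 + α) Γ t / 2)`, the remaining factor of `B t` tends to
`16 κ α / (α² - 1) < 0`, so `B` is eventually negative; as `B 0 = 1`, the intermediate value
theorem gives a positive zero.
-/

open Real Filter Topology

lemma exists_pos_root_of_eventually_neg {f : ℝ → ℝ} (hf : Continuous f) (h0 : 0 < f 0)
    (hneg : ∀ᶠ t in atTop, f t < 0) : ∃ t, 0 < t ∧ f t = 0 := by
  obtain ⟨T, hfT, hT⟩ := (hneg.and (eventually_gt_atTop 0)).exists
  obtain ⟨t, ht, hft⟩ := intermediate_value_Ioo' hT.le hf.continuousOn ⟨hfT, h0⟩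
  exact ⟨t, ht.1, hft⟩

lemma tendsto_exp_neg_mul_atTop_nhds_zero {p : ℝ} (hp : 0 < p) :
    Tendsto (fun t => exp (-(p * t))) atTop (𝓝 0) :=
  tendsto_exp_neg_atTop_nhds_zero.comp (tendsto_id.const_mul_atTop hp)

lemma eventually_exp_combination_neg {r p q a b c : ℝ} (hp : 0 < p) (hq : 0 < q) (ha : a < 0) :
    ∀ᶠ t in atTop,
      a * exp (-(r * t)) + b * exp (-((r + p) * t)) + c * exp (-((r + q) * t)) < 0 := by
  have hlim : Tendsto (fun t => a + b * exp (-(p * t)) + c * exp (-(q * t))) atTop (𝓝 a) := by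
    simpa using ((tendsto_exp_neg_mul_atTop_nhds_zero hp).const_mul b |>.const_add a).add
      ((tendsto_exp_neg_mul_atTop_nhds_zero hq).const_mul c)
  filter_upwards [hlim.eventually_lt_const ha] with t ht
  have hsplit (s : ℝ) : exp (-((r + s) * t)) = exp (-(r * t)) * exp (-(s * t)) := by
    rw [← exp_add]; ring_nf
  calc a * exp (-(r * t)) + b * exp (-((r + p) * t)) + c * exp (-((r + q) * t))
      = exp (-(r * t)) * (a + b * exp (-(p * t)) + c * exp (-(q * t))) := by
        rw [hsplit, hsplit]; ring
    _ < 0 := mul_neg_of_pos_of_neg (exp_pos _) ht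

lemma resonant_coeffs_sum_eq_one (κ : ℝ) {α : ℝ} (hα₁ : α - 1 ≠ 0) (hα₂ : α + 1 ≠ 0) :
    16 * κ * α / (α ^ 2 - 1) + (1 - 8 * κ / (α - 1)) - 8 * κ / (α + 1) = 1 := by
  have : α ^ 2 - 1 ≠ 0 := by
    rw [show α ^ 2 - 1 = (α - 1) * (α + 1) by ring]; exact mul_ne_zero hα₁ hα₂
  field_simp
  ring

theorem stmt8_general (Γ κ α : ℝ) (hΓ : 0 < Γ) (hκ0 : 0 < κ)
    (hα0 : 0 < α) (hα1 : α < 1) :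
    (fun t : ℝ => (16 * κ * α / (α ^ 2 - 1)) * Real.exp (-(1 + α) * Γ * t / 2) +
          (1 - 8 * κ / (α - 1)) * Real.exp (-Γ * t) -
        (8 * κ / (α + 1)) * Real.exp (-(1 + α) * Γ * t)) 0 = 1 ∧
      ∃ t : ℝ, 0 < t ∧
        (16 * κ * α / (α ^ 2 - 1)) * Real.exp (-(1 + α) * Γ * t / 2) +
            (1 - 8 * κ / (α - 1)) * Real.exp (-Γ * t) -
          (8 * κ / (α + 1)) * Real.exp (-(1 + α) * Γ * t) = 0 := by
  have hsq : α ^ 2 - 1 < 0 := by nlinarith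
  have hcoeff := resonant_coeffs_sum_eq_one κ (by linarith : α - 1 ≠ 0) (by linarith : α + 1 ≠ 0)
  refine ⟨?value_at_zero, exists_pos_root_of_eventually_neg (by fun_prop) ?pos_at_zero ?_⟩
  case value_at_zero | pos_at_zero =>
    simp only [mul_zero, zero_div, exp_zero, mul_one, hcoeff, zero_lt_one]
  have hneg := eventually_exp_combination_neg (r := (1 + α) * Γ / 2) (p := (1 - α) * Γ / 2)
    (q := (1 + α) * Γ / 2) (a := 16 * κ * α / (α ^ 2 - 1))
    (b := 1 - 8 * κ / (α - 1)) (c := -(8 * κ / (α + 1)))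
    (by nlinarith) (by nlinarith) (div_neg_of_pos_of_neg (by positivity) hsq)
  filter_upwards [hneg] with t ht
  convert ht using 1
  ring_nf

theorem stmt8 (Γ κ α : ℝ) (hΓ : 0 < Γ) (hκ0 : 0 < κ) (hκ1 : κ ≤ 1)
    (hα0 : 0 < α) (hα1 : α < 1) :
    (fun t : ℝ => (16 * κ * α / (α ^ 2 - 1)) * Real.exp (-(1 + α) * Γ * t / 2) +
          (1 - 8 * κ / (α - 1)) * Real.exp (-Γ * t) -
        (8 * κ / (α + 1)) * Real.exp (-(1 + α) * Γ * t)) 0 = 1 ∧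
      ∃ t : ℝ, 0 < t ∧
        (16 * κ * α / (α ^ 2 - 1)) * Real.exp (-(1 + α) * Γ * t / 2) +
            (1 - 8 * κ / (α - 1)) * Real.exp (-Γ * t) -
          (8 * κ / (α + 1)) * Real.exp (-(1 + α) * Γ * t) = 0 :=
  stmt8_general Γ κ α hΓ hκ0 hα0 hα1
end

section
/- Let κ ∈ (0,1], Γ > 0, and α ∈ (1, 8κ+1). Define B(t) = (16κα/(α²−1)) e^{−(1+α)Γt/2} + (1 − 8κ/(α−1)) e^{−Γt} − (8κ/(α+1)) e^{−(1+α)Γt}. Then there exists t > 0 with B(t) = 0. -/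
/-!
Since `α > 1`, the exponentials `e^{-(1+α)Γt/2}` and `e^{-(1+α)Γt}` decay faster than `e^{-Γt}`,
so `e^{Γt} B(t)` tends to `1 - 8κ/(α-1) < 0`, while it
equals `1` at `t = 0`; the intermediate value theorem gives a zero.
-/

open Real Filter Topology

/-- The profile `B(t)` of the statement. -/
noncomputable def resonantProfile (Γ κ α t : ℝ) : ℝ :=
  (16 * κ * α / (α ^ 2 - 1)) * Real.exp (-(1 + α) * Γ * t / 2) +
      (1 - 8 * κ / (α - 1)) * Real.exp (-Γ * t) -
    (8 * κ / (α + 1)) * Real.exp (-(1 + α) * Γ * t)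

theorem exists_pos_eq_zero_of_tendsto_neg {f : ℝ → ℝ} {c : ℝ} (hf : Continuous f)
    (h₀ : 0 < f 0) (hlim : Tendsto f atTop (𝓝 c)) (hc : c < 0) :
    ∃ t, 0 < t ∧ f t = 0 := by
  obtain ⟨T, hT, hfT⟩ :=
    ((hlim.eventually_lt_const hc).and (eventually_gt_atTop 0)).exists.imp fun _ h => h.symm
  obtain ⟨t, ht, hft⟩ := intermediate_value_Ioo' hT.le hf.continuousOn ⟨hfT, h₀⟩
  exact ⟨t, ht.1, hft⟩

theorem tendsto_exp_neg_mul_atTop {a : ℝ} (ha : 0 < a) :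
    Tendsto (fun t => Real.exp (-a * t)) atTop (𝓝 0) :=
  tendsto_exp_atBot.comp <| tendsto_id.const_mul_atTop_of_neg (neg_neg_of_pos ha)

section resonantProfile

variable {Γ κ α : ℝ}

theorem resonantProfile_zero (hα : 1 < α) : resonantProfile Γ κ α 0 = 1 := by
  have hm : α - 1 ≠ 0 := by linarith
  have hp : α + 1 ≠ 0 := by linarith
  have hsq : α ^ 2 - 1 = (α - 1) * (α + 1) := by ring
  simp only [resonantProfile, mul_zero, zero_div, Real.exp_zero, mul_one, hsq]
  field_simp
  ring

theorem exp_mul_resonantProfile (t : ℝ) :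
    Real.exp (Γ * t) * resonantProfile Γ κ α t =
      (16 * κ * α / (α ^ 2 - 1)) * Real.exp (-((α - 1) * Γ / 2) * t) +
        (1 - 8 * κ / (α - 1)) - (8 * κ / (α + 1)) * Real.exp (-(α * Γ) * t) := by
  have e₁ : Γ * t + -(1 + α) * Γ * t / 2 = -((α - 1) * Γ / 2) * t := by ring
  have e₂ : Γ * t + -Γ * t = 0 := by ring
  have e₃ : Γ * t + -(1 + α) * Γ * t = -(α * Γ) * t := by ring
  simp only [resonantProfile, mul_sub, mul_add, mul_left_comm (Real.exp (Γ * t)),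
    ← Real.exp_add, e₁, e₂, e₃, Real.exp_zero, mul_one]

theorem tendsto_exp_mul_resonantProfile (hΓ : 0 < Γ) (hα : 1 < α) :
    Tendsto (fun t => Real.exp (Γ * t) * resonantProfile Γ κ α t) atTop
      (𝓝 (1 - 8 * κ / (α - 1))) := by
  have hslow := tendsto_exp_neg_mul_atTop (a := (α - 1) * Γ / 2) (by nlinarith)
  have hfast := tendsto_exp_neg_mul_atTop (a := α * Γ) (by nlinarith)
  simp only [exp_mul_resonantProfile]
  simpa using
    ((hslow.const_mul (16 * κ * α / (α ^ 2 - 1))).add_const (1 - 8 * κ / (α - 1))).sub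
      (hfast.const_mul (8 * κ / (α + 1)))

end resonantProfile

theorem stmt9_general (Γ κ α : ℝ) (hΓ : 0 < Γ)
    (hα1 : 1 < α) (hα2 : α < 8 * κ + 1) :
    ∃ t : ℝ, 0 < t ∧
      (16 * κ * α / (α ^ 2 - 1)) * Real.exp (-(1 + α) * Γ * t / 2) +
          (1 - 8 * κ / (α - 1)) * Real.exp (-Γ * t) -
        (8 * κ / (α + 1)) * Real.exp (-(1 + α) * Γ * t) = 0 := by
  have hlimit_neg : 1 - 8 * κ / (α - 1) < 0 := by
    rw [sub_neg, one_lt_div (by linarith)]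
    linarith
  obtain ⟨t, ht, hzero⟩ := exists_pos_eq_zero_of_tendsto_neg
    (f := fun t => Real.exp (Γ * t) * resonantProfile Γ κ α t)
    (by unfold resonantProfile; fun_prop) (by simp [resonantProfile_zero hα1])
    (tendsto_exp_mul_resonantProfile hΓ hα1) hlimit_neg
  exact ⟨t, ht, (mul_eq_zero.mp hzero).resolve_left (Real.exp_pos _).ne'⟩

theorem stmt9 (Γ κ α : ℝ) (hΓ : 0 < Γ) (hκ0 : 0 < κ) (hκ1 : κ ≤ 1)
    (hα1 : 1 < α) (hα2 : α < 8 * κ + 1) :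
    ∃ t : ℝ, 0 < t ∧
      (16 * κ * α / (α ^ 2 - 1)) * Real.exp (-(1 + α) * Γ * t / 2) +
          (1 - 8 * κ / (α - 1)) * Real.exp (-Γ * t) -
        (8 * κ / (α + 1)) * Real.exp (-(1 + α) * Γ * t) = 0 :=
  stmt9_general Γ κ α hΓ hα1 hα2
end

section
/- Let Γ > 0, κ ∈ [0,1], and ξ : [0,∞) → ℝ nonnegative continuous with ∫₀^∞ ξ² = 1. Define A(t) = κΓ e^{−Γt}(∫₀ᵗ ξ(s) e^{Γs/2} ds)² and B(t) = e^{−Γt}(1 − 4κΓ ∫₀ᵗ ξ(s) e^{Γs/2} (∫₀ˢ ξ(τ) e^{−Γτ/2} dτ) ds). Then for all t ≥ 0 at which B(t) > 0, one has Ȧ(t)B(t) − A(t)Ḃ(t) ≥ 0, i.e. A/B is nondecreasing where B > 0. -/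
/-!
Write `A = e·a` and `B = e·b` with the common factor `e(t) = exp(-Γt)`. The factor drops out of
`A'B - AB' = e²(a'b - ab')`, and differentiating the integrals turns this into
`2κΓ ξ(t) e^{-Γt/2} (B(t) I₊(t) + 2 A(t) I₋(t))`, where `I±(t) = ∫₀ᵗ ξ(s) e^{±Γs/2} ds`.
Every factor is nonnegative as soon as `B(t) ≥ 0`.
-/

open MeasureTheory intervalIntegral Real

theorem deriv_mul_sub_mul_deriv_of_common_factor {A B e a b : ℝ → ℝ} {e' a' b' t : ℝ}
    (hA : A = fun u => e u * a u) (hB : B = fun u => e u * b u)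
    (he : HasDerivAt e e' t) (ha : HasDerivAt a a' t) (hb : HasDerivAt b b' t) :
    deriv A t * B t - A t * deriv B t = e t ^ 2 * (a' * b t - a t * b') := by
  subst hA hB
  rw [(he.fun_mul ha).deriv, (he.fun_mul hb).deriv]
  ring

/-- `I₊ = weightedIntegral Γ ξ` and `I₋ = weightedIntegral (-Γ) ξ`. -/
noncomputable def weightedIntegral (Γ : ℝ) (ξ : ℝ → ℝ) (t : ℝ) : ℝ :=
  ∫ s in (0:ℝ)..t, ξ s * exp (Γ * s / 2)

section WeightedIntegral

variable {Γ : ℝ} {ξ : ℝ → ℝ}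

theorem hasDerivAt_weightedIntegral (hξ : Continuous ξ) (t : ℝ) :
    HasDerivAt (weightedIntegral Γ ξ) (ξ t * exp (Γ * t / 2)) t :=
  ((hξ.mul (by fun_prop)).integral_hasStrictDerivAt 0 t).hasDerivAt

theorem continuous_weightedIntegral (hξ : Continuous ξ) : Continuous (weightedIntegral Γ ξ) :=
  continuous_iff_continuousAt.2 fun t => (hasDerivAt_weightedIntegral hξ t).continuousAt

theorem weightedIntegral_nonneg (hξ : ∀ s, 0 ≤ s → 0 ≤ ξ s) {t : ℝ} (ht : 0 ≤ t) :
    0 ≤ weightedIntegral Γ ξ t :=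
  integral_nonneg ht fun s hs => mul_nonneg (hξ s hs.1) (exp_pos _).le

end WeightedIntegral

theorem deriv_mul_sub_mul_deriv_eq {Γ κ : ℝ} {ξ A B : ℝ → ℝ} (hξ : Continuous ξ)
    (hA : A = fun t => κ * Γ * exp (-Γ * t) * weightedIntegral Γ ξ t ^ 2)
    (hB : B = fun t => exp (-Γ * t) *
      (1 - 4 * κ * Γ * ∫ s in (0:ℝ)..t, ξ s * exp (Γ * s / 2) * weightedIntegral (-Γ) ξ s))
    (t : ℝ) :
    deriv A t * B t - A t * deriv B t = 2 * κ * Γ * ξ t * exp (-Γ * t / 2) *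
      (B t * weightedIntegral Γ ξ t + 2 * A t * weightedIntegral (-Γ) ξ t) := by
  set I := weightedIntegral Γ ξ
  set J := weightedIntegral (-Γ) ξ
  have hE : HasDerivAt (fun u => exp (-Γ * u)) (exp (-Γ * t) * (-Γ)) t := by
    simpa using ((hasDerivAt_id t).const_mul (-Γ)).exp
  have hI := hasDerivAt_weightedIntegral (Γ := Γ) hξ t
  have hK : HasDerivAt (fun u => ∫ s in (0:ℝ)..u, ξ s * exp (Γ * s / 2) * J s)
      (ξ t * exp (Γ * t / 2) * J t) t :=
    (((hξ.mul (by fun_prop)).mul (continuous_weightedIntegral hξ)).integral_hasStrictDerivAt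
      0 t).hasDerivAt
  have hA' : A = fun u => exp (-Γ * u) * (κ * Γ * I u ^ 2) := by
    rw [hA]; funext u; ring
  rw [deriv_mul_sub_mul_deriv_of_common_factor hA' hB hE ((hI.pow 2).const_mul (κ * Γ))
    ((hK.const_mul (4 * κ * Γ)).const_sub 1), hA', hB]
  have hexp : exp (-Γ * t) * exp (Γ * t / 2) = exp (-Γ * t / 2) := by
    rw [← exp_add]; ring_nf
  linear_combination (2 * κ * Γ * ξ t * (exp (-Γ * t) * (1 - 4 * κ * Γ *
    ∫ s in (0:ℝ)..t, ξ s * exp (Γ * s / 2) * J s) * I t + 2 * (exp (-Γ * t) *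
    (κ * Γ * I t ^ 2)) * J t)) * hexp

theorem stmt12_general (Γ κ : ℝ) (hΓ : 0 < Γ) (hκ0 : 0 ≤ κ)
    (ξ : ℝ → ℝ) (hξ : ∀ s, 0 ≤ s → 0 ≤ ξ s) (hcont : Continuous ξ)
    (A B : ℝ → ℝ)
    (hA : A = fun t => κ * Γ * Real.exp (-Γ * t) *
      (∫ s in (0:ℝ)..t, ξ s * Real.exp (Γ * s / 2)) ^ 2)
    (hB : B = fun t => Real.exp (-Γ * t) *
      (1 - 4 * κ * Γ * ∫ s in (0:ℝ)..t,
        ξ s * Real.exp (Γ * s / 2) * ∫ τ in (0:ℝ)..s, ξ τ * Real.exp (-Γ * τ / 2))) :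
    ∀ t : ℝ, 0 ≤ t → 0 < B t →
      0 ≤ deriv A t * B t - A t * deriv B t := by
  intro t ht hBt
  rw [deriv_mul_sub_mul_deriv_eq hcont hA hB]
  have hI := weightedIntegral_nonneg (Γ := Γ) hξ ht
  have hJ := weightedIntegral_nonneg (Γ := -Γ) hξ ht
  have hAt : 0 ≤ A t := by rw [hA]; positivity
  have hξt := hξ t ht
  positivity

theorem stmt12 (Γ κ : ℝ) (hΓ : 0 < Γ) (hκ0 : 0 ≤ κ) (hκ1 : κ ≤ 1)
    (ξ : ℝ → ℝ) (hξ : ∀ s, 0 ≤ s → 0 ≤ ξ s) (hcont : Continuous ξ)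
    (hnorm : (∫ s in Set.Ioi (0:ℝ), ξ s ^ 2) = 1)
    (A B : ℝ → ℝ)
    (hA : A = fun t => κ * Γ * Real.exp (-Γ * t) *
      (∫ s in (0:ℝ)..t, ξ s * Real.exp (Γ * s / 2)) ^ 2)
    (hB : B = fun t => Real.exp (-Γ * t) *
      (1 - 4 * κ * Γ * ∫ s in (0:ℝ)..t,
        ξ s * Real.exp (Γ * s / 2) * ∫ τ in (0:ℝ)..s, ξ τ * Real.exp (-Γ * τ / 2))) :
    ∀ t : ℝ, 0 ≤ t → 0 < B t →
      0 ≤ deriv A t * B t - A t * deriv B t :=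
  stmt12_general Γ κ hΓ hκ0 ξ hξ hcont A B hA hB
end

section
/- Let Γ > 0, κ ∈ [0,1], and ξ : [0,∞) → ℝ nonnegative continuous. Define C(t) = e^{−Γt/2}(1 − 2κΓ ∫₀ᵗ ξ(s) e^{−Γs/2} (∫₀ˢ ξ(τ) e^{Γτ/2} dτ) ds) and B(t) = e^{−Γt}(1 − 4κΓ ∫₀ᵗ ξ(s) e^{Γs/2} (∫₀ˢ ξ(τ) e^{−Γτ/2} dτ) ds). If B(t) > 0 for all t ≥ 0, then C(t) > 0 for all t ≥ 0. -/
/-! For `τ ≤ s` the kernel `e^{-Γ(s-τ)/2}` is at most `1 ≤ e^{Γ(s-τ)/2}`, so the inner integral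
of `C` is dominated pointwise in `s` by that of `B`. With everything nonnegative this gives
`2κΓ ∫(C) ≤ 2κΓ ∫(B) ≤ 4κΓ ∫(B) < 1`, the last step being `B(t) > 0`. -/

open Real

lemma exp_neg_mul_integral_le_exp_mul_integral_s13 {f : ℝ → ℝ} {Γ s : ℝ} (hΓ : 0 ≤ Γ)
    (hs : 0 ≤ s) (hf : Continuous f) (hf0 : ∀ τ ∈ Set.Icc 0 s, 0 ≤ f τ) :
    exp (-Γ * s / 2) * ∫ τ in (0:ℝ)..s, f τ * exp (Γ * τ / 2)
      ≤ exp (Γ * s / 2) * ∫ τ in (0:ℝ)..s, f τ * exp (-Γ * τ / 2) := by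
  rw [← intervalIntegral.integral_const_mul, ← intervalIntegral.integral_const_mul]
  refine intervalIntegral.integral_mono_on hs
    ((by fun_prop : Continuous _).intervalIntegrable _ _)
    ((by fun_prop : Continuous _).intervalIntegrable _ _) fun τ hτ => ?_
  have hkernel : exp (-Γ * s / 2) * exp (Γ * τ / 2) ≤ exp (Γ * s / 2) * exp (-Γ * τ / 2) := by
    rw [← exp_add, ← exp_add, exp_le_exp]
    nlinarith [hτ.2]
  calc exp (-Γ * s / 2) * (f τ * exp (Γ * τ / 2))
      = f τ * (exp (-Γ * s / 2) * exp (Γ * τ / 2)) := by ring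
    _ ≤ f τ * (exp (Γ * s / 2) * exp (-Γ * τ / 2)) :=
      mul_le_mul_of_nonneg_left hkernel (hf0 τ hτ)
    _ = exp (Γ * s / 2) * (f τ * exp (-Γ * τ / 2)) := by ring

lemma continuous_primitive_mul_exp {f : ℝ → ℝ} (hf : Continuous f) (c : ℝ) :
    Continuous fun s => ∫ τ in (0:ℝ)..s, f τ * exp (c * τ / 2) :=
  intervalIntegral.continuous_primitive
    (fun _ _ => (by fun_prop : Continuous _).intervalIntegrable _ _) 0

section

variable {ξ : ℝ → ℝ} {Γ t : ℝ}

lemma integral_mul_exp_mul_primitive_nonneg (c d : ℝ) (ht : 0 ≤ t)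
    (hξ : ∀ s, 0 ≤ s → 0 ≤ ξ s) :
    0 ≤ ∫ s in (0:ℝ)..t, ξ s * exp (c * s / 2) * ∫ τ in (0:ℝ)..s, ξ τ * exp (d * τ / 2) :=
  intervalIntegral.integral_nonneg ht fun s hs =>
    mul_nonneg (mul_nonneg (hξ s hs.1) (exp_pos _).le)
    (intervalIntegral.integral_nonneg hs.1 fun τ hτ => mul_nonneg (hξ τ hτ.1) (exp_pos _).le)

lemma integral_coherence_le_integral_population (hΓ : 0 ≤ Γ) (ht : 0 ≤ t)
    (hξ : ∀ s, 0 ≤ s → 0 ≤ ξ s) (hcont : Continuous ξ) :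
    ∫ s in (0:ℝ)..t, ξ s * exp (-Γ * s / 2) * ∫ τ in (0:ℝ)..s, ξ τ * exp (Γ * τ / 2)
      ≤ ∫ s in (0:ℝ)..t, ξ s * exp (Γ * s / 2) * ∫ τ in (0:ℝ)..s, ξ τ * exp (-Γ * τ / 2) := by
  have hG := continuous_primitive_mul_exp hcont Γ
  have hF := continuous_primitive_mul_exp hcont (-Γ)
  refine intervalIntegral.integral_mono_on ht
    ((by fun_prop : Continuous _).intervalIntegrable _ _)
    ((by fun_prop : Continuous _).intervalIntegrable _ _) fun s hs => ?_
  have hinner := exp_neg_mul_integral_le_exp_mul_integral_s13 hΓ hs.1 hcont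
    fun τ hτ => hξ τ hτ.1
  rw [mul_assoc, mul_assoc]
  exact mul_le_mul_of_nonneg_left hinner (hξ s hs.1)

end

theorem stmt13_general (Γ κ : ℝ) (hΓ : 0 < Γ) (hκ0 : 0 ≤ κ)
    (ξ : ℝ → ℝ) (hξ : ∀ s, 0 ≤ s → 0 ≤ ξ s) (hcont : Continuous ξ)
    (C B : ℝ → ℝ)
    (hC : C = fun t => Real.exp (-Γ * t / 2) *
      (1 - 2 * κ * Γ * ∫ s in (0:ℝ)..t,
        ξ s * Real.exp (-Γ * s / 2) * ∫ τ in (0:ℝ)..s, ξ τ * Real.exp (Γ * τ / 2)))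
    (hB : B = fun t => Real.exp (-Γ * t) *
      (1 - 4 * κ * Γ * ∫ s in (0:ℝ)..t,
        ξ s * Real.exp (Γ * s / 2) * ∫ τ in (0:ℝ)..s, ξ τ * Real.exp (-Γ * τ / 2)))
    (hBpos : ∀ t : ℝ, 0 ≤ t → 0 < B t) :
    ∀ t : ℝ, 0 ≤ t → 0 < C t := by
  intro t ht
  have hBt : 0 < 1 - 4 * κ * Γ * ∫ s in (0:ℝ)..t,
      ξ s * exp (Γ * s / 2) * ∫ τ in (0:ℝ)..s, ξ τ * exp (-Γ * τ / 2) := by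
    have := hBpos t ht
    rw [hB] at this
    exact (mul_pos_iff_of_pos_left (exp_pos _)).mp this
  have hJ0 := integral_mul_exp_mul_primitive_nonneg Γ (-Γ) ht hξ
  have hIJ := integral_coherence_le_integral_population hΓ.le ht hξ hcont
  have hκΓ : 0 ≤ κ * Γ := mul_nonneg hκ0 hΓ.le
  rw [hC]
  refine mul_pos (exp_pos _) ?_
  nlinarith [mul_le_mul_of_nonneg_left hIJ hκΓ]

theorem stmt13 (Γ κ : ℝ) (hΓ : 0 < Γ) (hκ0 : 0 ≤ κ) (hκ1 : κ ≤ 1)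
    (ξ : ℝ → ℝ) (hξ : ∀ s, 0 ≤ s → 0 ≤ ξ s) (hcont : Continuous ξ)
    (C B : ℝ → ℝ)
    (hC : C = fun t => Real.exp (-Γ * t / 2) *
      (1 - 2 * κ * Γ * ∫ s in (0:ℝ)..t,
        ξ s * Real.exp (-Γ * s / 2) * ∫ τ in (0:ℝ)..s, ξ τ * Real.exp (Γ * τ / 2)))
    (hB : B = fun t => Real.exp (-Γ * t) *
      (1 - 4 * κ * Γ * ∫ s in (0:ℝ)..t,
        ξ s * Real.exp (Γ * s / 2) * ∫ τ in (0:ℝ)..s, ξ τ * Real.exp (-Γ * τ / 2)))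
    (hBpos : ∀ t : ℝ, 0 ≤ t → 0 < B t) :
    ∀ t : ℝ, 0 ≤ t → 0 < C t :=
  stmt13_general Γ κ hΓ hκ0 ξ hξ hcont C B hC hB hBpos
end

section
/- Under the hypotheses of the previous statement (resonance, ξ ≥ 0, B(t) > 0 for all t ≥ 0, hence C(t) > 0), the coherence eigenvalue C satisfies Ċ(t) = −(Γ/2)C(t) − 2κΓ e^{−Γt} ξ(t) ∫₀ᵗ ξ(s) e^{Γs/2} ds < 0 for all t > 0 where ξ(t) > 0, and in general Ċ(t) ≤ −(Γ/2)C(t) < 0; hence C is strictly decreasing. -/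
open MeasureTheory intervalIntegral Real

/-!
By the product rule and the fundamental theorem of calculus,
`Ċ = -(Γ/2) C - 2κΓ e^{-Γt} ξ(t) ∫₀ᵗ ξ(s) e^{Γs/2} ds`, where the factor `e^{-Γt}` collects the
prefactor `e^{-Γt/2}` and the weight `e^{-Γt/2}` of the outer integrand. Since `ξ ≥ 0`, the
correction term is nonnegative, so `Ċ ≤ -(Γ/2) C < 0` wherever `C > 0`, and `C` is strictly
decreasing on `[0, ∞)`.
-/

theorem hasDerivAt_exp_mul_one_sub_integral {c k : ℝ} {g : ℝ → ℝ} (hg : Continuous g)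
    (t : ℝ) :
    HasDerivAt (fun t => exp (c * t) * (1 - k * ∫ s in (0:ℝ)..t, g s))
      (c * (exp (c * t) * (1 - k * ∫ s in (0:ℝ)..t, g s)) - k * exp (c * t) * g t) t := by
  have hexp : HasDerivAt (fun t => exp (c * t)) (exp (c * t) * c) t :=
    ((hasDerivAt_id t).const_mul c).exp.congr_deriv (by simp)
  have hint : HasDerivAt (fun t => ∫ s in (0:ℝ)..t, g s) (g t) t :=
    integral_hasDerivAt_right (hg.intervalIntegrable 0 t)
      (hg.stronglyMeasurableAtFilter _ _) hg.continuousAt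
  exact (hexp.mul ((hint.const_mul k).const_sub 1)).congr_deriv (by ring)

theorem integral_mul_exp_nonneg {ξ : ℝ → ℝ} (hξ : ∀ s, 0 ≤ s → 0 ≤ ξ s) (f : ℝ → ℝ) {t : ℝ}
    (ht : 0 ≤ t) : 0 ≤ ∫ s in (0:ℝ)..t, ξ s * exp (f s) :=
  integral_nonneg ht fun s hs => mul_nonneg (hξ s hs.1) (exp_pos _).le

noncomputable def coherence (Γ κ : ℝ) (ξ : ℝ → ℝ) (t : ℝ) : ℝ :=
  exp (-Γ * t / 2) * (1 - 2 * κ * Γ * ∫ s in (0:ℝ)..t,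
    ξ s * exp (-Γ * s / 2) * ∫ τ in (0:ℝ)..s, ξ τ * exp (Γ * τ / 2))

theorem hasDerivAt_coherence {Γ κ : ℝ} {ξ : ℝ → ℝ} (hξ : Continuous ξ) (t : ℝ) :
    HasDerivAt (coherence Γ κ ξ) (-(Γ / 2) * coherence Γ κ ξ t -
      2 * κ * Γ * exp (-Γ * t) * ξ t * ∫ s in (0:ℝ)..t, ξ s * exp (Γ * s / 2)) t := by
  have hinner : Continuous fun s => ∫ τ in (0:ℝ)..s, ξ τ * exp (Γ * τ / 2) :=
    continuous_primitive (fun a b => (by fun_prop : Continuous fun τ =>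
      ξ τ * exp (Γ * τ / 2)).intervalIntegrable a b) 0
  have hsplit : exp (-Γ * t) = exp (-Γ * t / 2) * exp (-Γ * t / 2) := by
    rw [← exp_add]; ring_nf
  have hrewrite : ∀ t, -Γ * t / 2 = -(Γ / 2) * t := fun t => by ring
  unfold coherence
  simp only [hrewrite] at hsplit ⊢
  have hintegrand : Continuous fun s =>
      ξ s * exp (-(Γ / 2) * s) * ∫ τ in (0:ℝ)..s, ξ τ * exp (Γ * τ / 2) := by
    fun_prop
  refine (hasDerivAt_exp_mul_one_sub_integral hintegrand t).congr_deriv ?_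
  rw [hsplit]; ring

theorem stmt14_general (Γ κ : ℝ) (hΓ : 0 < Γ) (hκ0 : 0 ≤ κ)
    (ξ : ℝ → ℝ) (hξ : ∀ s, 0 ≤ s → 0 ≤ ξ s) (hcont : Continuous ξ)
    (C : ℝ → ℝ)
    (hC : C = fun t => Real.exp (-Γ * t / 2) *
      (1 - 2 * κ * Γ * ∫ s in (0:ℝ)..t,
        ξ s * Real.exp (-Γ * s / 2) * ∫ τ in (0:ℝ)..s, ξ τ * Real.exp (Γ * τ / 2)))
    (hCpos : ∀ t : ℝ, 0 ≤ t → 0 < C t) :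
    (∀ t : ℝ, 0 ≤ t →
        deriv C t = -(Γ / 2) * C t -
            2 * κ * Γ * Real.exp (-Γ * t) * ξ t *
              ∫ s in (0:ℝ)..t, ξ s * Real.exp (Γ * s / 2) ∧
          deriv C t ≤ -(Γ / 2) * C t ∧ -(Γ / 2) * C t < 0) ∧
      StrictAntiOn C (Set.Ici 0) := by
  have hderiv : ∀ t, HasDerivAt C (-(Γ / 2) * C t -
      2 * κ * Γ * exp (-Γ * t) * ξ t * ∫ s in (0:ℝ)..t, ξ s * exp (Γ * s / 2)) t := by
    subst hC; exact hasDerivAt_coherence hcont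
  have hdecay : ∀ t, 0 ≤ t → deriv C t ≤ -(Γ / 2) * C t := fun t ht => by
    have hintegral := integral_mul_exp_nonneg hξ (fun s => Γ * s / 2) ht
    rw [(hderiv t).deriv, sub_le_self_iff]
    exact mul_nonneg (mul_nonneg (by positivity) (hξ t ht)) hintegral
  have hneg : ∀ t, 0 ≤ t → -(Γ / 2) * C t < 0 := fun t ht =>
    mul_neg_of_neg_of_pos (by linarith) (hCpos t ht)
  refine ⟨fun t ht => ⟨(hderiv t).deriv, hdecay t ht, hneg t ht⟩, ?_⟩
  refine strictAntiOn_of_deriv_neg (convex_Ici 0)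
    (fun x _ => (hderiv x).continuousAt.continuousWithinAt) fun x hx => ?_
  rw [interior_Ici] at hx
  exact (hdecay x hx.le).trans_lt (hneg x hx.le)

theorem stmt14 (Γ κ : ℝ) (hΓ : 0 < Γ) (hκ0 : 0 ≤ κ) (hκ1 : κ ≤ 1)
    (ξ : ℝ → ℝ) (hξ : ∀ s, 0 ≤ s → 0 ≤ ξ s) (hcont : Continuous ξ)
    (C B : ℝ → ℝ)
    (hC : C = fun t => Real.exp (-Γ * t / 2) *
      (1 - 2 * κ * Γ * ∫ s in (0:ℝ)..t,
        ξ s * Real.exp (-Γ * s / 2) * ∫ τ in (0:ℝ)..s, ξ τ * Real.exp (Γ * τ / 2)))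
    (hB : B = fun t => Real.exp (-Γ * t) *
      (1 - 4 * κ * Γ * ∫ s in (0:ℝ)..t,
        ξ s * Real.exp (Γ * s / 2) * ∫ τ in (0:ℝ)..s, ξ τ * Real.exp (-Γ * τ / 2)))
    (hBpos : ∀ t : ℝ, 0 ≤ t → 0 < B t)
    (hCpos : ∀ t : ℝ, 0 ≤ t → 0 < C t) :
    (∀ t : ℝ, 0 ≤ t →
        deriv C t = -(Γ / 2) * C t -
            2 * κ * Γ * Real.exp (-Γ * t) * ξ t *
              ∫ s in (0:ℝ)..t, ξ s * Real.exp (Γ * s / 2) ∧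
          deriv C t ≤ -(Γ / 2) * C t ∧ -(Γ / 2) * C t < 0) ∧
      StrictAntiOn C (Set.Ici 0) :=
  stmt14_general Γ κ hΓ hκ0 ξ hξ hcont C hC hCpos
end

section
/- Let Γ > 0, κ ∈ [0,1], ξ : [0,∞) → ℝ nonnegative continuous, and suppose B(t) > 0 for all t ≥ 0, where B(t) = e^{−Γt}(1 − 4κΓ ∫₀ᵗ ξ(s)e^{Γs/2}(∫₀ˢ ξ(τ)e^{−Γτ/2}dτ)ds). Then the dephasing rate γ_z(t) = (1/2)Ḃ(t)/B(t) − Ċ(t)/C(t) satisfies γ_z(t) ≤ 0 for all t ≥ 0, where C(t) = e^{−Γt/2}(1 − 2κΓ ∫₀ᵗ ξ(s)e^{−Γs/2}(∫₀ˢ ξ(τ)e^{Γτ/2}dτ)ds). -/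
/-!
With `P = expPrimitive Γ ξ` and `Q = expPrimitive (-Γ) ξ` we have `B = e^{-Γt} a(t)` and
`C = e^{-Γt/2} b(t)`, where `a = 1 - 4κΓ ∫₀ᵗ ξ e^{Γs/2} Q` and `b = 1 - 2κΓ ∫₀ᵗ ξ e^{-Γs/2} P`.
The exponentials drop out of the logarithmic derivatives, leaving
`γ_z = 2κΓ (ξ(t) e^{-Γt/2} P(t) / b - ξ(t) e^{Γt/2} Q(t) / a)`.
Comparing the integrands of `P` and `Q` gives `e^{-Γs/2} P(s) ≤ e^{Γs/2} Q(s)`; integrated against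
`ξ` this yields `a ≤ b`, and `a > 0` because `B > 0`, so the bracket is nonpositive.
-/

open intervalIntegral Real

lemma logDeriv_exp_mul_one_sub_integral {u g : ℝ → ℝ} {u' k t : ℝ} (hu : HasDerivAt u u' t)
    (hg : Continuous g) (h : 1 - k * ∫ s in (0:ℝ)..t, g s ≠ 0) :
    logDeriv (fun t => exp (u t) * (1 - k * ∫ s in (0:ℝ)..t, g s)) t
      = u' - k * g t / (1 - k * ∫ s in (0:ℝ)..t, g s) := by
  have hF : HasDerivAt (fun t => exp (u t) * (1 - k * ∫ s in (0:ℝ)..t, g s))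
      (exp (u t) * u' * (1 - k * ∫ s in (0:ℝ)..t, g s) + exp (u t) * -(k * g t)) t :=
    hu.exp.mul (((hg.integral_hasStrictDerivAt 0 t).hasDerivAt.const_mul k).const_sub 1)
  rw [logDeriv_apply, hF.deriv]
  field_simp
  ring

noncomputable def expPrimitive (c : ℝ) (ξ : ℝ → ℝ) (s : ℝ) : ℝ :=
  ∫ τ in (0:ℝ)..s, ξ τ * exp (c * τ / 2)

section

variable {Γ κ s t : ℝ} {ξ : ℝ → ℝ}

@[fun_prop]
lemma continuous_expPrimitive (hξ : Continuous ξ) (c : ℝ) : Continuous (expPrimitive c ξ) :=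
  continuous_primitive (fun _ _ => (by fun_prop : Continuous _).intervalIntegrable _ _) 0

lemma expPrimitive_nonneg (hξ : ∀ τ ∈ Set.Icc 0 s, 0 ≤ ξ τ) (hs : 0 ≤ s) (c : ℝ) :
    0 ≤ expPrimitive c ξ s :=
  integral_nonneg hs fun τ hτ => mul_nonneg (hξ τ hτ) (exp_pos _).le

lemma exp_neg_mul_expPrimitive_le (hΓ : 0 ≤ Γ) (hξ : Continuous ξ)
    (hξ₀ : ∀ τ ∈ Set.Icc 0 s, 0 ≤ ξ τ) (hs : 0 ≤ s) :
    exp (-Γ * s / 2) * expPrimitive Γ ξ s ≤ exp (Γ * s / 2) * expPrimitive (-Γ) ξ s := by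
  rw [expPrimitive, expPrimitive, ← integral_const_mul, ← integral_const_mul]
  refine integral_mono_on hs ((by fun_prop : Continuous _).intervalIntegrable _ _)
    ((by fun_prop : Continuous _).intervalIntegrable _ _) fun τ hτ => ?_
  rw [mul_left_comm, mul_left_comm _ (ξ τ), ← exp_add, ← exp_add]
  exact mul_le_mul_of_nonneg_left
    (exp_le_exp.2 (by nlinarith [mul_le_mul_of_nonneg_left hτ.2 hΓ])) (hξ₀ τ hτ)

variable (hΓ : 0 ≤ Γ) (hξ : Continuous ξ) (hξ₀ : ∀ τ, 0 ≤ τ → 0 ≤ ξ τ)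
include hΓ hξ hξ₀

lemma mul_exp_neg_mul_expPrimitive_le (hs : 0 ≤ s) :
    ξ s * exp (-Γ * s / 2) * expPrimitive Γ ξ s
      ≤ ξ s * exp (Γ * s / 2) * expPrimitive (-Γ) ξ s := by
  rw [mul_assoc, mul_assoc]
  exact mul_le_mul_of_nonneg_left
    (exp_neg_mul_expPrimitive_le hΓ hξ (fun τ hτ => hξ₀ τ hτ.1) hs) (hξ₀ s hs)

lemma one_sub_integral_expPrimitive_le (hκ : 0 ≤ κ) (ht : 0 ≤ t) :
    1 - 4 * κ * Γ * ∫ s in (0:ℝ)..t, ξ s * exp (Γ * s / 2) * expPrimitive (-Γ) ξ s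
      ≤ 1 - 2 * κ * Γ * ∫ s in (0:ℝ)..t, ξ s * exp (-Γ * s / 2) * expPrimitive Γ ξ s := by
  have hI : ∫ s in (0:ℝ)..t, ξ s * exp (-Γ * s / 2) * expPrimitive Γ ξ s
      ≤ ∫ s in (0:ℝ)..t, ξ s * exp (Γ * s / 2) * expPrimitive (-Γ) ξ s :=
    integral_mono_on ht (Continuous.intervalIntegrable (by fun_prop) _ _)
      (Continuous.intervalIntegrable (by fun_prop) _ _)
      fun s hs => mul_exp_neg_mul_expPrimitive_le hΓ hξ hξ₀ hs.1
  have hJ : 0 ≤ ∫ s in (0:ℝ)..t, ξ s * exp (Γ * s / 2) * expPrimitive (-Γ) ξ s :=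
    integral_nonneg ht fun s hs => mul_nonneg (mul_nonneg (hξ₀ s hs.1) (exp_pos _).le)
      (expPrimitive_nonneg (fun τ hτ => hξ₀ τ hτ.1) hs.1 (-Γ))
  have := mul_nonneg hκ hΓ
  nlinarith

end

theorem stmt17_general (Γ κ : ℝ) (hΓ : 0 < Γ) (hκ0 : 0 ≤ κ)
    (ξ : ℝ → ℝ) (hξ : ∀ s, 0 ≤ s → 0 ≤ ξ s) (hcont : Continuous ξ)
    (B C : ℝ → ℝ)
    (hB : B = fun t => Real.exp (-Γ * t) *
      (1 - 4 * κ * Γ * ∫ s in (0:ℝ)..t,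
        ξ s * Real.exp (Γ * s / 2) * ∫ τ in (0:ℝ)..s, ξ τ * Real.exp (-Γ * τ / 2)))
    (hC : C = fun t => Real.exp (-Γ * t / 2) *
      (1 - 2 * κ * Γ * ∫ s in (0:ℝ)..t,
        ξ s * Real.exp (-Γ * s / 2) * ∫ τ in (0:ℝ)..s, ξ τ * Real.exp (Γ * τ / 2)))
    (hBpos : ∀ t : ℝ, 0 ≤ t → 0 < B t) :
    ∀ t : ℝ, 0 ≤ t →
      (1 / 2) * deriv B t / B t - deriv C t / C t ≤ 0 := by
  intro t ht
  -- `-Γ * τ / 2` parses as `(-Γ) * τ / 2`, so both inner integrals fold.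
  have fold (c s : ℝ) : ∫ τ in (0:ℝ)..s, ξ τ * exp (c * τ / 2) = expPrimitive c ξ s := rfl
  subst hB hC
  simp only [fold] at hBpos ⊢
  have ha := pos_of_mul_pos_right (hBpos t ht) (exp_pos _).le
  have hab := one_sub_integral_expPrimitive_le hΓ.le hcont hξ hκ0 ht
  rw [mul_div_assoc, ← logDeriv_apply, ← logDeriv_apply,
    logDeriv_exp_mul_one_sub_integral ((hasDerivAt_id' t).const_mul (-Γ)) (by fun_prop) ha.ne',
    logDeriv_exp_mul_one_sub_integral (((hasDerivAt_id' t).const_mul (-Γ)).div_const 2)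
      (by fun_prop) (ha.trans_le hab).ne']
  set a := 1 - 4 * κ * Γ * ∫ s in (0:ℝ)..t, ξ s * exp (Γ * s / 2) * expPrimitive (-Γ) ξ s
  set b := 1 - 2 * κ * Γ * ∫ s in (0:ℝ)..t, ξ s * exp (-Γ * s / 2) * expPrimitive Γ ξ s
  have hrate := div_le_div₀ (mul_nonneg (mul_nonneg (hξ t ht) (exp_pos _).le)
      (expPrimitive_nonneg (fun τ hτ => hξ τ hτ.1) ht (-Γ)))
    (mul_exp_neg_mul_expPrimitive_le hΓ.le hcont hξ ht) ha hab
  calc _ = 2 * κ * Γ * (ξ t * exp (-Γ * t / 2) * expPrimitive Γ ξ t / b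
        - ξ t * exp (Γ * t / 2) * expPrimitive (-Γ) ξ t / a) := by ring
    _ ≤ 0 := mul_nonpos_of_nonneg_of_nonpos (by positivity) (sub_nonpos.2 hrate)

theorem stmt17 (Γ κ : ℝ) (hΓ : 0 < Γ) (hκ0 : 0 ≤ κ) (hκ1 : κ ≤ 1)
    (ξ : ℝ → ℝ) (hξ : ∀ s, 0 ≤ s → 0 ≤ ξ s) (hcont : Continuous ξ)
    (B C : ℝ → ℝ)
    (hB : B = fun t => Real.exp (-Γ * t) *
      (1 - 4 * κ * Γ * ∫ s in (0:ℝ)..t,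
        ξ s * Real.exp (Γ * s / 2) * ∫ τ in (0:ℝ)..s, ξ τ * Real.exp (-Γ * τ / 2)))
    (hC : C = fun t => Real.exp (-Γ * t / 2) *
      (1 - 2 * κ * Γ * ∫ s in (0:ℝ)..t,
        ξ s * Real.exp (-Γ * s / 2) * ∫ τ in (0:ℝ)..s, ξ τ * Real.exp (Γ * τ / 2)))
    (hBpos : ∀ t : ℝ, 0 ≤ t → 0 < B t) :
    ∀ t : ℝ, 0 ≤ t →
      (1 / 2) * deriv B t / B t - deriv C t / C t ≤ 0 :=
  stmt17_general Γ κ hΓ hκ0 ξ hξ hcont B C hB hC hBpos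
end
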